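/- Let x and y be rational numbers with 0 < y < 1 and -y < x < 0, and set q = (x-1)(y-1) and γ = y-1. Then for every matroid M on a finite ground set E with no coloops, (-1)^{r(E)} · Z̃(M;q,γ) > 0, where r is the rank function of M. -/

import Mathlib

/-- A matroid on a finite ground set `E`, presented by its rank function. -/
structure RankMatroid (α : Type) [DecidableEq α] where
  /-- the ground set -/
  E : Finset α
  /-- the rank function -/
  r : Finset α → ℕ
  rank_le_card : ∀ A, A ⊆ E → r A ≤ A.card
  rank_mono : ∀ A B, A ⊆ B → B ⊆ E → r A ≤ r B
  rank_submodular : ∀ A B, A ⊆ E → B ⊆ E → r (A ∪ B) + r (A ∩ B) ≤ r A + r B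

/-- The matroid Tutte polynomial with constant edge weight `γ`:
`Z̃(M;q,γ) = Σ_{A⊆E} q^{-r(A)} γ^{|A|}`. -/
noncomputable def Ztc {α : Type} [DecidableEq α] (M : RankMatroid α) (q γ : ℚ) : ℚ :=
  ∑ A ∈ M.E.powerset, q ^ (-(M.r A : ℤ)) * γ ^ A.card

/-- A basis of a matroid: an independent subset of the ground set of full rank. -/
def RankMatroid.IsBasis {α : Type} [DecidableEq α] (M : RankMatroid α) (B : Finset α) : Prop :=
  B ⊆ M.E ∧ M.r B = B.card ∧ M.r B = M.r M.E

/-- A coloop of a matroid: an element belonging to every basis. -/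
def RankMatroid.IsColoop {α : Type} [DecidableEq α] (M : RankMatroid α) (e : α) : Prop :=
  e ∈ M.E ∧ ∀ B : Finset α, M.IsBasis B → e ∈ B

/-!
Induction on `|E|`. For `e ∈ E` let `K` be its series class: `e` together with the coloops of
`M \ e`. Every proper subset of `K` is independent and skew to `E \ K`, so splitting each `A ⊆ E`
as `(A \ K) ∪ (A ∩ K)` gives, with `u = γ / q` and `k = |K|`,
`Z̃(M) = ((1 + u)^k - u^k) Z̃(M \ K) + q^{-r(K)} γ^k Z̃(M / K)`,
and both minors are again coloopless. In the region of the theorem `a = -u = 1 / (1 - x)`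
satisfies `0 < 1 - a < a`. If `K` is independent, both terms are positive once the signs
`(-1)^r` are matched. If `K` is a circuit, it is a separator, `M / K = M \ K`, and the combined
coefficient `a^{k-1} (a + γ) - (a - 1)^k` is positive because `(1 - a)^2 < a (a + γ)`, which
is `x^2 < x + y - x y`.
-/

lemma Finset.sum_powerset_union_of_disjoint {α β : Type*} [DecidableEq α] [AddCommMonoid β]
    {s t : Finset α} (h : Disjoint s t) (f : Finset α → β) :
    ∑ C ∈ (s ∪ t).powerset, f C = ∑ A ∈ s.powerset, ∑ B ∈ t.powerset, f (A ∪ B) := by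
  have hsplit : ∀ C ∈ (s ∪ t).powerset, C ∩ s ∪ C ∩ t = C := fun C hC => by
    rw [← Finset.inter_union_distrib_left, Finset.inter_eq_left.mpr (Finset.mem_powerset.mp hC)]
  rw [← Finset.sum_product']
  refine Finset.sum_nbij' (fun C => (C ∩ s, C ∩ t)) (fun p => p.1 ∪ p.2) (by simp) ?_ hsplit ?_
    fun C hC => by rw [hsplit C hC]
  · simp only [Finset.mem_product, Finset.mem_powerset]
    exact fun p hp => Finset.union_subset_union hp.1 hp.2
  · rintro ⟨A, B⟩ hp
    simp only [Finset.mem_product, Finset.mem_powerset] at hp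
    simp only [Finset.union_inter_distrib_right, Finset.inter_eq_left.mpr hp.1,
      Finset.inter_eq_left.mpr hp.2, Finset.disjoint_iff_inter_eq_empty.mp (h.mono_left hp.1),
      Finset.disjoint_iff_inter_eq_empty.mp (h.symm.mono_left hp.2), Finset.union_empty,
      Finset.empty_union]

lemma neg_pow_succ_lt_pow_mul {R : Type*} [CommRing R] [LinearOrder R] [IsStrictOrderedRing R]
    {t a b : R} (ht : 0 < t) (hta : t < a) (hb : t ^ 2 < a * b) (m : ℕ) :
    (-t) ^ (m + 1) < a ^ m * b := by
  have ha : 0 < a := ht.trans hta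
  rcases m with _ | m
  · have : 0 < a * b := (pow_pos ht 2).trans hb
    have := pos_of_mul_pos_right this ha.le
    simp only [zero_add, pow_one, pow_zero, one_mul]
    linarith
  · calc (-t) ^ (m + 2) ≤ t ^ (m + 2) :=
          (le_abs_self _).trans_eq (by rw [abs_pow, abs_neg, abs_of_pos ht])
      _ = t ^ m * t ^ 2 := by ring
      _ ≤ a ^ m * t ^ 2 := by gcongr
      _ < a ^ m * (a * b) := by gcongr
      _ = a ^ (m + 1) * b := by ring

namespace RankMatroid

variable {α : Type} [DecidableEq α] (M : RankMatroid α)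

lemma rank_empty : M.r ∅ = 0 :=
  Nat.le_zero.mp (by simpa using M.rank_le_card ∅ (Finset.empty_subset _))

lemma rank_insert_le {A : Finset α} {x : α} (hA : A ⊆ M.E) (hx : x ∈ M.E) :
    M.r (insert x A) ≤ M.r A + 1 := by
  have h := M.rank_submodular A {x} hA (by simpa using hx)
  have h1 : M.r {x} ≤ 1 := by simpa using M.rank_le_card {x} (by simpa using hx)
  rw [Finset.union_singleton] at h
  omega

lemma rank_union_le_add_card {A B : Finset α} (hA : A ⊆ M.E) (hB : B ⊆ M.E) :
    M.r (A ∪ B) ≤ M.r A + B.card := by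
  induction B using Finset.induction with
  | empty => simp
  | insert x B hx ih =>
    have hB' := (Finset.insert_subset_iff.mp hB).2
    rw [Finset.union_insert, Finset.card_insert_of_notMem hx]
    have := M.rank_insert_le (Finset.union_subset hA hB') (hB (Finset.mem_insert_self x B))
    have := ih hB'
    omega

@[simps]
def delete (K : Finset α) : RankMatroid α where
  E := M.E \ K
  r := M.r
  rank_le_card A hA := M.rank_le_card A (hA.trans Finset.sdiff_subset)
  rank_mono A B hAB hB := M.rank_mono A B hAB (hB.trans Finset.sdiff_subset)
  rank_submodular A B hA hB :=
    M.rank_submodular A B (hA.trans Finset.sdiff_subset) (hB.trans Finset.sdiff_subset)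

@[simps]
def contract (K : Finset α) (hK : K ⊆ M.E) : RankMatroid α where
  E := M.E \ K
  r A := M.r (A ∪ K) - M.r K
  rank_le_card A hA := by
    have := M.rank_union_le_add_card hK (hA.trans Finset.sdiff_subset)
    rw [Finset.union_comm] at this
    omega
  rank_mono A B hAB hB := by
    have := M.rank_mono (A ∪ K) (B ∪ K) (Finset.union_subset_union_left hAB)
      (Finset.union_subset (hB.trans Finset.sdiff_subset) hK)
    omega
  rank_submodular A B hA hB := by
    have hAE := hA.trans Finset.sdiff_subset
    have hBE := hB.trans Finset.sdiff_subset
    have h := M.rank_submodular (A ∪ K) (B ∪ K) (Finset.union_subset hAE hK)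
      (Finset.union_subset hBE hK)
    rw [← Finset.union_union_distrib_right, ← Finset.inter_union_distrib_right] at h
    have hK_le : ∀ C ⊆ M.E, M.r K ≤ M.r (C ∪ K) := fun C hC =>
      M.rank_mono K _ Finset.subset_union_right (Finset.union_subset hC hK)
    have := hK_le (A ∩ B) (Finset.inter_subset_left.trans hAE)
    have := hK_le (A ∪ B) (Finset.union_subset hAE hBE)
    have := hK_le A hAE
    have := hK_le B hBE
    omega

def Coloopless : Prop := ∀ e ∈ M.E, M.r (M.E.erase e) = M.r M.E

lemma coloopless_of_forall_not_isColoop (h : ∀ e ∈ M.E, ¬ M.IsColoop e) : M.Coloopless := by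
  intro e he
  obtain ⟨B, ⟨hBE, -, hBr⟩, heB⟩ : ∃ B, M.IsBasis B ∧ e ∉ B := by
    simpa [IsColoop, he] using h e he
  refine le_antisymm (M.rank_mono _ _ (Finset.erase_subset e M.E) subset_rfl) ?_
  rw [← hBr]
  exact M.rank_mono _ _ (Finset.subset_erase.mpr ⟨hBE, heB⟩) (Finset.erase_subset e M.E)

variable {M}

lemma Coloopless.contract (hM : M.Coloopless) {K : Finset α} (hK : K ⊆ M.E) :
    (M.contract K hK).Coloopless := by
  intro g hg
  have hgK : g ∉ K := (Finset.mem_sdiff.mp hg).2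
  have hKg : K ⊆ M.E.erase g := fun k hk =>
    Finset.mem_erase.mpr ⟨ne_of_mem_of_not_mem hk hgK, hK hk⟩
  simp only [contract_r, contract_E, ← Finset.erase_sdiff_comm, Finset.sdiff_union_of_subset hKg,
    Finset.sdiff_union_of_subset hK, hM g (Finset.mem_sdiff.mp hg).1]

variable (M)

def coloopsIn (G : Finset α) : Finset α := G.filter fun f => M.r (G.erase f) < M.r G

lemma coloopsIn_subset (G : Finset α) : M.coloopsIn G ⊆ G := Finset.filter_subset _ _

lemma rank_erase_eq_of_notMem_coloopsIn {G : Finset α} {g : α} (hG : G ⊆ M.E)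
    (hg : g ∉ M.coloopsIn G) : M.r (G.erase g) = M.r G := by
  by_cases hgG : g ∈ G
  · exact le_antisymm (M.rank_mono _ _ (Finset.erase_subset g G) hG)
      (not_lt.mp fun h => hg (Finset.mem_filter.mpr ⟨hgG, h⟩))
  · rw [Finset.erase_eq_of_notMem hgG]

lemma rank_insert_eq_of_mem_coloopsIn {G A : Finset α} {f : α} (hG : G ⊆ M.E)
    (hf : f ∈ M.coloopsIn G) (hA : A ⊆ G.erase f) : M.r (insert f A) = M.r A + 1 := by
  obtain ⟨hfG, hdrop⟩ := Finset.mem_filter.mp hf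
  have hGf : G.erase f ⊆ M.E := (Finset.erase_subset f G).trans hG
  have hAE : A ⊆ M.E := hA.trans hGf
  have hsub := M.rank_submodular (insert f A) (G.erase f) (Finset.insert_subset (hG hfG) hAE) hGf
  rw [Finset.insert_union, Finset.union_eq_right.mpr hA, Finset.insert_erase hfG] at hsub
  have hmono : M.r A ≤ M.r (insert f A ∩ G.erase f) :=
    M.rank_mono A _ (Finset.subset_inter (Finset.subset_insert f A) hA)
      (Finset.inter_subset_right.trans hGf)
  have := M.rank_insert_le hAE (hG hfG)
  omega

lemma rank_union_eq_of_subset_coloopsIn {G A B : Finset α} (hG : G ⊆ M.E) (hA : A ⊆ G)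
    (hB : B ⊆ M.coloopsIn G) (hAB : Disjoint A B) : M.r (A ∪ B) = M.r A + B.card := by
  induction B using Finset.induction with
  | empty => simp
  | insert f B hf ih =>
    obtain ⟨hfG, hB'⟩ := Finset.insert_subset_iff.mp hB
    have hfA : f ∉ A := Finset.disjoint_right.mp hAB (Finset.mem_insert_self f B)
    have hAB' : A ∪ B ⊆ G.erase f := Finset.subset_erase.mpr
      ⟨Finset.union_subset hA (hB'.trans (M.coloopsIn_subset G)), by simp [hfA, hf]⟩
    rw [Finset.union_insert, M.rank_insert_eq_of_mem_coloopsIn hG hfG hAB',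
      ih hB' (Finset.disjoint_insert_right.mp hAB).2, Finset.card_insert_of_notMem hf, add_assoc]

lemma coloopsIn_sdiff_coloopsIn {G : Finset α} (hG : G ⊆ M.E) :
    M.coloopsIn (G \ M.coloopsIn G) = ∅ := by
  refine Finset.eq_empty_of_forall_notMem fun g hg => ?_
  obtain ⟨hgGS, hdrop⟩ := Finset.mem_filter.mp hg
  obtain ⟨-, hgS⟩ := Finset.mem_sdiff.mp hgGS
  have hSg : M.coloopsIn G ⊆ G.erase g := Finset.subset_erase.mpr ⟨M.coloopsIn_subset G, hgS⟩
  have h₁ := M.rank_union_eq_of_subset_coloopsIn hG Finset.sdiff_subset subset_rfl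
    Finset.sdiff_disjoint
  have h₂ := M.rank_union_eq_of_subset_coloopsIn hG
    ((Finset.erase_subset g _).trans Finset.sdiff_subset) subset_rfl
    (Finset.sdiff_disjoint.mono_left (Finset.erase_subset g _))
  rw [Finset.sdiff_union_of_subset (M.coloopsIn_subset G)] at h₁
  have hunion : (G \ M.coloopsIn G).erase g ∪ M.coloopsIn G = G.erase g := by
    rw [← Finset.erase_sdiff_comm, Finset.sdiff_union_of_subset hSg]
  rw [hunion] at h₂
  have := M.rank_erase_eq_of_notMem_coloopsIn hG hgS
  omega

/-- For coloopless `M`, the series class of `e`. -/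
def seriesClass (e : α) : Finset α := insert e (M.coloopsIn (M.E.erase e))

lemma sdiff_seriesClass (e : α) :
    M.E \ M.seriesClass e = M.E.erase e \ M.coloopsIn (M.E.erase e) := by
  rw [seriesClass, Finset.sdiff_insert, Finset.erase_sdiff_comm]

lemma coloopless_delete_seriesClass (e : α) : (M.delete (M.seriesClass e)).Coloopless := by
  intro g hg
  simp only [delete_E, delete_r, sdiff_seriesClass] at hg ⊢
  have hG : M.E.erase e ⊆ M.E := Finset.erase_subset e M.E
  exact M.rank_erase_eq_of_notMem_coloopsIn (Finset.sdiff_subset.trans hG)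
    (by simp [M.coloopsIn_sdiff_coloopsIn hG])

def IsSeriesSet (K : Finset α) : Prop :=
  K ⊆ M.E ∧ ∀ A ⊆ M.E \ K, ∀ B ⊂ K, M.r (A ∪ B) = M.r A + B.card

variable {M}

lemma Coloopless.isSeriesSet_seriesClass (hM : M.Coloopless) {e : α} (he : e ∈ M.E) :
    M.IsSeriesSet (M.seriesClass e) := by
  set G := M.E.erase e
  set S := M.coloopsIn G
  have hG : G ⊆ M.E := Finset.erase_subset e M.E
  have hSG : S ⊆ G := M.coloopsIn_subset G
  have hfree : ∀ A ⊆ G \ S, ∀ B ⊆ S, M.r (A ∪ B) = M.r A + B.card := fun A hA B hB =>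
    M.rank_union_eq_of_subset_coloopsIn hG (hA.trans Finset.sdiff_subset) hB
      ((Finset.disjoint_of_subset_left hA Finset.sdiff_disjoint).mono_right hB)
  refine ⟨Finset.insert_subset he (hSG.trans hG), ?_⟩
  rw [sdiff_seriesClass]
  intro A hA B hB
  by_cases heB : e ∈ B
  · -- `B` misses some `f ∈ S`, and `e` is a coloop of `M \ f`.
    obtain ⟨f, hfK, hfB⟩ := Finset.exists_of_ssubset hB
    have hfe : f ≠ e := by rintro rfl; exact hfB heB
    have hfS : f ∈ S := (Finset.mem_insert.mp hfK).resolve_left hfe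
    have heS' : e ∈ M.coloopsIn (M.E.erase f) := by
      refine Finset.mem_filter.mpr ⟨Finset.mem_erase.mpr ⟨hfe.symm, he⟩, ?_⟩
      rw [Finset.erase_right_comm, hM f (hG (hSG hfS)), ← hM e he]
      exact (Finset.mem_filter.mp hfS).2
    have hBe : B.erase e ⊆ S := fun b hb => by
      obtain ⟨hbe, hbB⟩ := Finset.mem_erase.mp hb
      exact (Finset.mem_insert.mp (hB.subset hbB)).resolve_left hbe
    have hsub : A ∪ B.erase e ⊆ (M.E.erase f).erase e := by
      rw [Finset.erase_right_comm, Finset.subset_erase]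
      refine ⟨Finset.union_subset (hA.trans Finset.sdiff_subset) (hBe.trans hSG), ?_⟩
      simp only [Finset.mem_union, Finset.mem_erase, not_or]
      exact ⟨fun hfA => (Finset.mem_sdiff.mp (hA hfA)).2 hfS, fun h => hfB h.2⟩
    rw [← Finset.insert_erase heB, Finset.union_insert,
      M.rank_insert_eq_of_mem_coloopsIn (Finset.erase_subset f M.E) heS' hsub,
      hfree A hA _ hBe, Finset.card_insert_of_notMem (Finset.notMem_erase e B), add_assoc]
  · exact hfree A hA B fun b hb =>
      (Finset.mem_insert.mp (hB.subset hb)).resolve_left fun h => heB (h ▸ hb)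

variable {K : Finset α} {e : α}

lemma IsSeriesSet.rank_sdiff_add_card (hK : M.IsSeriesSet K) (hM : M.Coloopless) (he : e ∈ K) :
    M.r (M.E \ K) + K.card = M.r M.E + 1 := by
  have h := hK.2 _ subset_rfl _ (Finset.erase_ssubset he)
  have hunion : M.E \ K ∪ K.erase e = M.E.erase e := by
    rw [← Finset.erase_eq_of_notMem (fun h => (Finset.mem_sdiff.mp h).2 he : e ∉ M.E \ K),
      ← Finset.erase_union_distrib, Finset.sdiff_union_of_subset hK.1]
  rw [hunion, hM e (hK.1 he)] at h
  have := Finset.card_erase_add_one he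
  omega

lemma IsSeriesSet.rank_erase_add_one (hK : M.IsSeriesSet K) (he : e ∈ K) :
    M.r (K.erase e) + 1 = K.card := by
  have h := hK.2 ∅ (Finset.empty_subset _) _ (Finset.erase_ssubset he)
  rw [Finset.empty_union, rank_empty, zero_add] at h
  rw [h, Finset.card_erase_add_one he]

lemma IsSeriesSet.rank_add_one_eq_card_or_rank_eq_card (hK : M.IsSeriesSet K) (he : e ∈ K) :
    M.r K + 1 = K.card ∨ M.r K = K.card := by
  have := M.rank_mono _ _ (Finset.erase_subset e K) hK.1
  have := M.rank_le_card K hK.1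
  have := hK.rank_erase_add_one he
  omega

lemma IsSeriesSet.rank_union_eq_add (hK : M.IsSeriesSet K) (he : e ∈ K)
    (hr : M.r K + 1 = K.card) {A : Finset α} (hA : A ⊆ M.E \ K) :
    M.r (A ∪ K) = M.r A + M.r K := by
  have hAE : A ⊆ M.E := hA.trans Finset.sdiff_subset
  have hAK : Disjoint A K := Finset.disjoint_of_subset_left hA Finset.sdiff_disjoint
  have hfree := hK.2 A hA _ (Finset.erase_ssubset he)
  have hsub := M.rank_submodular (A ∪ K.erase e) K
    (Finset.union_subset hAE ((Finset.erase_subset e K).trans hK.1)) hK.1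
  rw [Finset.union_assoc, Finset.union_eq_right.mpr (Finset.erase_subset e K),
    Finset.union_inter_distrib_right, Finset.disjoint_iff_inter_eq_empty.mp hAK, Finset.empty_union,
    Finset.inter_eq_left.mpr (Finset.erase_subset e K)] at hsub
  have hmono := M.rank_mono _ (A ∪ K) (Finset.union_subset_union_right (Finset.erase_subset e K))
    (Finset.union_subset hAE hK.1)
  have := hK.rank_erase_add_one he
  have := Finset.card_erase_add_one he
  omega

lemma rank_contract_add_rank (hK : K ⊆ M.E) :
    (M.contract K hK).r (M.contract K hK).E + M.r K = M.r M.E := by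
  rw [contract_r, contract_E, Finset.sdiff_union_of_subset hK]
  exact Nat.sub_add_cancel (M.rank_mono K M.E hK subset_rfl)

lemma Ztc_eq_sum (M : RankMatroid α) (q γ : ℚ) :
    Ztc M q γ = ∑ A ∈ M.E.powerset, q⁻¹ ^ M.r A * γ ^ A.card := by
  simp only [Ztc, zpow_neg, zpow_natCast, inv_pow]

lemma Ztc_contract_eq_Ztc_delete (hK : K ⊆ M.E)
    (h : ∀ A ⊆ M.E \ K, M.r (A ∪ K) = M.r A + M.r K) (q γ : ℚ) :
    Ztc (M.contract K hK) q γ = Ztc (M.delete K) q γ := by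
  refine Finset.sum_congr rfl fun A hA => ?_
  rw [contract_r, h A (Finset.mem_powerset.mp hA), Nat.add_sub_cancel, delete_r]

lemma IsSeriesSet.Ztc_eq (hK : M.IsSeriesSet K) (q γ : ℚ) :
    Ztc M q γ = ((1 + q⁻¹ * γ) ^ K.card - (q⁻¹ * γ) ^ K.card) * Ztc (M.delete K) q γ
      + q⁻¹ ^ M.r K * γ ^ K.card * Ztc (M.contract K hK.1) q γ := by
  have hAK : ∀ A ∈ (M.E \ K).powerset, Disjoint A K := fun A hA =>
    Finset.disjoint_of_subset_left (Finset.mem_powerset.mp hA) Finset.sdiff_disjoint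
  have hproper : ∑ B ∈ K.powerset.erase K, (q⁻¹ * γ) ^ B.card
      = (1 + q⁻¹ * γ) ^ K.card - (q⁻¹ * γ) ^ K.card := by
    rw [eq_sub_iff_add_eq, Finset.sum_erase_add _ _ (Finset.mem_powerset_self K), add_comm,
      ← Finset.sum_pow_mul_eq_add_pow]
    simp
  rw [Ztc_eq_sum, Ztc_eq_sum, Ztc_eq_sum, delete_E, contract_E]
  conv_lhs => rw [← Finset.sdiff_union_of_subset hK.1]
  rw [Finset.sum_powerset_union_of_disjoint Finset.sdiff_disjoint, Finset.mul_sum, Finset.mul_sum,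
    ← Finset.sum_add_distrib]
  refine Finset.sum_congr rfl fun A hA => ?_
  rw [← Finset.sum_erase_add _ _ (Finset.mem_powerset_self K), ← hproper, Finset.sum_mul]
  congr 1
  · refine Finset.sum_congr rfl fun B hB => ?_
    have hBK : B ⊂ K := Finset.ssubset_iff_subset_ne.mpr
      ⟨Finset.mem_powerset.mp (Finset.mem_of_mem_erase hB), Finset.ne_of_mem_erase hB⟩
    rw [hK.2 A (Finset.mem_powerset.mp hA) B hBK, delete_r,
      Finset.card_union_of_disjoint ((hAK A hA).mono_right hBK.subset)]
    ring
  · have hle : M.r K ≤ M.r (A ∪ K) := M.rank_mono _ _ Finset.subset_union_right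
      (Finset.union_subset ((Finset.mem_powerset.mp hA).trans Finset.sdiff_subset) hK.1)
    obtain ⟨d, hd⟩ := Nat.exists_eq_add_of_le hle
    rw [contract_r, Finset.card_union_of_disjoint (hAK A hA), hd, Nat.add_sub_cancel_left]
    ring

variable {q γ a : ℚ}

lemma IsSeriesSet.neg_one_pow_rank_eq (hK : M.IsSeriesSet K) (hM : M.Coloopless) (he : e ∈ K)
    {m : ℕ} (hm : K.card = m + 1) :
    (-1 : ℚ) ^ M.r M.E = (-1) ^ (M.delete K).r (M.delete K).E * (-1) ^ m := by
  have := hK.rank_sdiff_add_card hM he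
  rw [← pow_add, delete_r, delete_E]
  congr 1
  omega

theorem IsSeriesSet.neg_one_pow_mul_Ztc_pos_of_rank_eq_card (hu : q⁻¹ * γ = -a)
    (ht : 0 < 1 - a) (hta : 1 - a < a) (hM : M.Coloopless) (hK : M.IsSeriesSet K) (he : e ∈ K)
    (hr : M.r K = K.card) (hdel : 0 < (-1) ^ (M.delete K).r (M.delete K).E * Ztc (M.delete K) q γ)
    (hcon : 0 < (-1) ^ (M.contract K hK.1).r (M.contract K hK.1).E
      * Ztc (M.contract K hK.1) q γ) :
    0 < (-1) ^ M.r M.E * Ztc M q γ := by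
  obtain ⟨m, hm⟩ : ∃ m, K.card = m + 1 :=
    Nat.exists_eq_add_one.mpr (Finset.card_pos.mpr ⟨e, he⟩)
  have hexpand := hK.Ztc_eq q γ
  rw [hr, hm, ← mul_pow, hu, ← sub_eq_add_neg] at hexpand
  have hdel_sign := hK.neg_one_pow_rank_eq hM he hm
  have hcon_sign : (-1 : ℚ) ^ M.r M.E
      = -((-1) ^ (M.contract K hK.1).r (M.contract K hK.1).E * (-1) ^ m) := by
    rw [← rank_contract_add_rank hK.1, hr, hm, ← add_assoc, pow_succ, pow_add]
    ring
  set rdel := (M.delete K).r (M.delete K).E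
  set rcon := (M.contract K hK.1).r (M.contract K hK.1).E
  set Zdel := Ztc (M.delete K) q γ
  set Zcon := Ztc (M.contract K hK.1) q γ
  have hsign : ((-1 : ℚ) ^ m) ^ 2 = 1 := by rw [← pow_mul, mul_comm, pow_mul]; simp
  have key : (-1) ^ M.r M.E * Ztc M q γ
      = (a ^ m * a - (-(1 - a)) ^ (m + 1)) * ((-1) ^ rdel * Zdel)
        + a ^ (m + 1) * ((-1) ^ rcon * Zcon) := by
    rw [hexpand, neg_pow a, neg_pow (1 - a)]
    linear_combination ((1 - a) ^ (m + 1) - (-1) ^ (m + 1) * a ^ (m + 1)) * Zdel * hdel_sign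
      + (-1) ^ (m + 1) * a ^ (m + 1) * Zcon * hcon_sign
      + a ^ (m + 1) * ((-1) ^ rdel * Zdel + (-1) ^ rcon * Zcon) * hsign
  have hsq : (1 - a) ^ 2 < a * a := by nlinarith
  rw [key]
  exact add_pos (mul_pos (sub_pos.mpr (neg_pow_succ_lt_pow_mul ht hta hsq m)) hdel)
    (mul_pos (pow_pos (ht.trans hta) _) hcon)

theorem IsSeriesSet.neg_one_pow_mul_Ztc_pos_of_rank_add_one_eq_card (hu : q⁻¹ * γ = -a)
    (ht : 0 < 1 - a) (hta : 1 - a < a) (hb : (1 - a) ^ 2 < a * (a + γ)) (hM : M.Coloopless)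
    (hK : M.IsSeriesSet K) (he : e ∈ K) (hr : M.r K + 1 = K.card)
    (hdel : 0 < (-1) ^ (M.delete K).r (M.delete K).E * Ztc (M.delete K) q γ) :
    0 < (-1) ^ M.r M.E * Ztc M q γ := by
  obtain ⟨m, hm⟩ : ∃ m, K.card = m + 1 :=
    Nat.exists_eq_add_one.mpr (Finset.card_pos.mpr ⟨e, he⟩)
  have hexpand := hK.Ztc_eq q γ
  rw [Ztc_contract_eq_Ztc_delete hK.1 (fun A hA => hK.rank_union_eq_add he hr hA),
    show M.r K = m by omega, hm, pow_succ γ, ← mul_assoc, ← mul_pow, hu,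
    ← sub_eq_add_neg] at hexpand
  have hdel_sign := hK.neg_one_pow_rank_eq hM he hm
  set rdel := (M.delete K).r (M.delete K).E
  set Zdel := Ztc (M.delete K) q γ
  have hsign : ((-1 : ℚ) ^ m) ^ 2 = 1 := by rw [← pow_mul, mul_comm, pow_mul]; simp
  have key : (-1) ^ M.r M.E * Ztc M q γ
      = (a ^ m * (a + γ) - (-(1 - a)) ^ (m + 1)) * ((-1) ^ rdel * Zdel) := by
    rw [hexpand, hdel_sign, neg_pow a, neg_pow (1 - a), neg_pow a]
    linear_combination (-1) ^ rdel * Zdel * (a ^ (m + 1) + a ^ m * γ) * hsign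
  rw [key]
  exact mul_pos (sub_pos.mpr (neg_pow_succ_lt_pow_mul ht hta hb m)) hdel

theorem Coloopless.neg_one_pow_mul_Ztc_pos (hu : q⁻¹ * γ = -a) (ht : 0 < 1 - a)
    (hta : 1 - a < a) (hb : (1 - a) ^ 2 < a * (a + γ)) {M : RankMatroid α}
    (hM : M.Coloopless) : 0 < (-1) ^ M.r M.E * Ztc M q γ := by
  induction hn : M.E.card using Nat.strong_induction_on generalizing M with
  | _ n ih =>
  obtain hE | ⟨e, he⟩ := M.E.eq_empty_or_nonempty
  · simp [Ztc, hE, M.rank_empty]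
  set K := M.seriesClass e
  have heK : e ∈ K := Finset.mem_insert_self e _
  have hK := hM.isSeriesSet_seriesClass he
  have hlt : (M.E \ K).card < n :=
    hn ▸ Finset.card_lt_card (Finset.sdiff_ssubset hK.1 ⟨e, heK⟩)
  have hdel := ih _ hlt (M.coloopless_delete_seriesClass e) rfl
  obtain hr | hr := hK.rank_add_one_eq_card_or_rank_eq_card heK
  · exact hK.neg_one_pow_mul_Ztc_pos_of_rank_add_one_eq_card hu ht hta hb hM heK hr hdel
  · exact hK.neg_one_pow_mul_Ztc_pos_of_rank_eq_card hu ht hta hM heK hr hdel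
      (ih _ hlt (hM.contract hK.1) rfl)

end RankMatroid

theorem matroid_tutte_sign_regionM_general {α : Type} [DecidableEq α] (x y : ℚ)
    (hy1 : y < 1) (hxy : -y < x) (hx0 : x < 0)
    (M : RankMatroid α) (hcoloopless : ∀ e ∈ M.E, ¬ M.IsColoop e) :
    0 < (-1 : ℚ) ^ M.r M.E * Ztc M ((x - 1) * (y - 1)) (y - 1) := by
  have hx : 0 < 1 - x := by linarith
  have hx' : x - 1 ≠ 0 := by linarith
  have hy : y - 1 ≠ 0 := by linarith
  refine (M.coloopless_of_forall_not_isColoop hcoloopless).neg_one_pow_mul_Ztc_pos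
    (a := 1 / (1 - x)) ?_ ?_ ?_ ?_
  · field_simp
    ring
  · field_simp
    linarith
  · rw [← sub_pos]
    field_simp
    linarith
  · rw [← sub_pos]
    field_simp
    nlinarith

/-- for rationals `0 < y < 1`, `-y < x < 0`, with `q = (x-1)(y-1)` and
`γ = y - 1`, every matroid `M` without coloops on a finite ground set `E` satisfies
`(-1)^{r(E)}·Z̃(M;q,γ) > 0`. -/
theorem matroid_tutte_sign_regionM {α : Type} [DecidableEq α] (x y : ℚ)
    (hy0 : 0 < y) (hy1 : y < 1) (hxy : -y < x) (hx0 : x < 0)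
    (M : RankMatroid α) (hcoloopless : ∀ e ∈ M.E, ¬ M.IsColoop e) :
    0 < (-1 : ℚ) ^ M.r M.E * Ztc M ((x - 1) * (y - 1)) (y - 1) :=
  matroid_tutte_sign_regionM_general x y hy1 hxy hx0 M hcoloopless
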